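/- arXiv:1812.09448 — 8 statements merged into one kernel-verified Lean document; each statement's English description precedes it below -/
import Mathlib

section
/- Let S ⊆ U be nonempty and let π = {B_1, …, B_m} be a partition of U. Then the sum, over all ordered pairs (u_i, u_{i'}) with u_i, u_{i'} ∈ S lying in different blocks of π, of the squares (√(p_i p_{i'})/Pr(S))² of the indistinction-amplitudes of ρ(S) that are zeroed by the classical Lüders mixture operation equals the logical entropy of the resulting matrix: Σ_{(i,i'): u_i,u_{i'} ∈ S, u_i and u_{i'} in different blocks of π} (p_i p_{i'})/Pr(S)² = 1 − tr(ρ̂(S)²). -/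
open Matrix

/-- `B : ι → Finset (Fin n)` is a partition of `Fin n`: blocks are nonempty,
pairwise disjoint, and cover the whole set. -/
structure IsPartition {n : ℕ} {ι : Type*} (B : ι → Finset (Fin n)) : Prop where
  blocks_nonempty : ∀ j, (B j).Nonempty
  blocks_disjoint : ∀ j k, j ≠ k → Disjoint (B j) (B k)
  blocks_cover : ∀ i, ∃ j, i ∈ B j

/-- The (classical) density matrix `ρ(S)` of a subset `S ⊆ U`:
entries `√(pᵢ pᵢ')/Pr(S)` when both indices are in `S`, else `0`. -/
noncomputable def rhoS {n : ℕ} (p : Fin n → ℝ) (S : Finset (Fin n)) :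
    Matrix (Fin n) (Fin n) ℝ :=
  Matrix.of fun i i' =>
    if i ∈ S ∧ i' ∈ S then Real.sqrt (p i * p i') / (∑ k ∈ S, p k) else 0

/-- The diagonal 0–1 projection matrix `P_B` of a subset `B`. -/
def projM {n : ℕ} (B : Finset (Fin n)) : Matrix (Fin n) (Fin n) ℝ :=
  Matrix.of fun i i' => if i = i' ∧ i ∈ B then 1 else 0

/-- The classical Lüders mixture operation `ρ ↦ Σ_j P_{B_j} ρ P_{B_j}`. -/
noncomputable def luders {n : ℕ} {ι : Type*} [Fintype ι] (B : ι → Finset (Fin n))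
    (ρ : Matrix (Fin n) (Fin n) ℝ) : Matrix (Fin n) (Fin n) ℝ :=
  ∑ j, projM (B j) * ρ * projM (B j)

/-- The density matrix `ρ(π) = Σ_j Pr(B_j) ρ(B_j)` of a partition. -/
noncomputable def rhoPart {n : ℕ} {ι : Type*} [Fintype ι] (p : Fin n → ℝ)
    (B : ι → Finset (Fin n)) : Matrix (Fin n) (Fin n) ℝ :=
  ∑ j, (∑ i ∈ B j, p i) • rhoS p (B j)

/-- The logical entropy `h(π) = 1 - Σ_j Pr(B_j)²` of a partition. -/
def logEntropy {n : ℕ} {ι : Type*} [Fintype ι] (p : Fin n → ℝ)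
    (B : ι → Finset (Fin n)) : ℝ :=
  1 - ∑ j, (∑ i ∈ B j, p i) ^ 2

/-- The dit-set of a partition: ordered pairs lying in different blocks. -/
def ditSet {n : ℕ} {ι : Type*} (B : ι → Finset (Fin n)) : Set (Fin n × Fin n) :=
  {q | ¬ ∃ j, q.1 ∈ B j ∧ q.2 ∈ B j}

/-- The indit-set of a partition: ordered pairs lying in the same block. -/
def inditSet {n : ℕ} {ι : Type*} (B : ι → Finset (Fin n)) : Set (Fin n × Fin n) :=
  {q | ∃ j, q.1 ∈ B j ∧ q.2 ∈ B j}

/-- The pure-state density matrix `ρ(ψ) = ψψ†` with entries `α_i ᾱ_{i'}`. -/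
noncomputable def rhoPsi {n : ℕ} (ψ : Fin n → ℂ) : Matrix (Fin n) (Fin n) ℂ :=
  Matrix.of fun i i' => ψ i * star (ψ i')

/-- The diagonal 0–1 projection matrix `P_B` of a subset `B` (complex version). -/
noncomputable def projC {n : ℕ} (B : Finset (Fin n)) : Matrix (Fin n) (Fin n) ℂ :=
  Matrix.of fun i i' => if i = i' ∧ i ∈ B then 1 else 0

/-- The quantum Lüders mixture operation `ρ ↦ Σ_j P_j ρ P_j`. -/
noncomputable def ludersC {n : ℕ} {ι : Type*} [Fintype ι] (B : ι → Finset (Fin n))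
    (ρ : Matrix (Fin n) (Fin n) ℂ) : Matrix (Fin n) (Fin n) ℂ :=
  ∑ j, projC (B j) * ρ * projC (B j)

/-! On a partition with disjoint blocks the Lüders operation keeps exactly the entries of `ρ(S)`
indexed by pairs lying in a common block and zeroes the others. Since `ρ(S)` is symmetric,
`tr(ρ̂(S)²)` is the sum of the squared kept entries `pᵢ pᵢ' / Pr(S)²`, while the squared entries
over all of `S × S` add up to `(Σ_S p)² / Pr(S)² = 1`; the zeroed ones account for the rest. -/

section Luders

open Function

variable {n : ℕ}

lemma projM_mul_mul_projM_apply (B : Finset (Fin n)) (ρ : Matrix (Fin n) (Fin n) ℝ)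
    (i i' : Fin n) :
    (projM B * ρ * projM B) i i' = if i ∈ B ∧ i' ∈ B then ρ i i' else 0 := by
  by_cases hi : i ∈ B <;> by_cases hi' : i' ∈ B <;>
    simp [projM, Matrix.mul_apply, ite_and, hi, hi']

lemma luders_apply {ι : Type*} [Fintype ι] {B : ι → Finset (Fin n)}
    (hB : Pairwise (Disjoint on B)) (ρ : Matrix (Fin n) (Fin n) ℝ) (i i' : Fin n) :
    luders B ρ i i' = if ∃ j, i ∈ B j ∧ i' ∈ B j then ρ i i' else 0 := by
  simp only [luders, Matrix.sum_apply, projM_mul_mul_projM_apply]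
  split_ifs with hsame
  · obtain ⟨j₀, hj₀⟩ := hsame
    rw [Finset.sum_eq_single j₀ (fun j _ hj => if_neg fun hj' =>
      Finset.disjoint_left.mp (hB hj) hj'.1 hj₀.1) (by simp), if_pos hj₀]
  · exact Finset.sum_eq_zero fun j _ => if_neg fun hj => hsame ⟨j, hj⟩

lemma rhoS_mul_rhoS_apply_swap {p : Fin n → ℝ} (hp : ∀ i, 0 ≤ p i) (S : Finset (Fin n))
    (i k : Fin n) :
    rhoS p S i k * rhoS p S k i =
      if i ∈ S ∧ k ∈ S then p i * p k / (∑ l ∈ S, p l) ^ 2 else 0 := by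
  by_cases hi : i ∈ S <;> by_cases hk : k ∈ S <;> simp only [rhoS, Matrix.of_apply, hi, hk,
    and_self, and_true, and_false, if_true, if_false, mul_zero]
  rw [mul_comm (p k), div_mul_div_comm, Real.mul_self_sqrt (mul_nonneg (hp i) (hp k)), sq]

lemma trace_luders_rhoS_mul_self {ι : Type*} [Fintype ι] {B : ι → Finset (Fin n)}
    (hB : Pairwise (Disjoint on B)) {p : Fin n → ℝ} (hp : ∀ i, 0 ≤ p i) (S : Finset (Fin n)) :
    Matrix.trace (luders B (rhoS p S) * luders B (rhoS p S)) =
      ∑ q ∈ Finset.univ.filter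
          (fun q : Fin n × Fin n => q.1 ∈ S ∧ q.2 ∈ S ∧ ∃ j, q.1 ∈ B j ∧ q.2 ∈ B j),
        p q.1 * p q.2 / (∑ k ∈ S, p k) ^ 2 := by
  rw [Finset.sum_filter, Fintype.sum_prod_type]
  simp only [Matrix.trace, Matrix.diag, Matrix.mul_apply]
  refine Finset.sum_congr rfl fun i _ => Finset.sum_congr rfl fun k _ => ?_
  have hsymm : (∃ j, k ∈ B j ∧ i ∈ B j) ↔ ∃ j, i ∈ B j ∧ k ∈ B j :=
    exists_congr fun _ => and_comm
  by_cases hsame : ∃ j, i ∈ B j ∧ k ∈ B j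
  · simp only [luders_apply hB, hsymm, hsame, if_true, rhoS_mul_rhoS_apply_swap hp, and_true]
  · simp only [luders_apply hB, hsymm, hsame, if_false, mul_zero, and_false]

end Luders

lemma sum_filter_mem_mem_mul_div_sq {α K : Type*} [Fintype α] [DecidableEq α] [Field K]
    {p : α → K} {S : Finset α} (hS : ∑ k ∈ S, p k ≠ 0) :
    ∑ q ∈ Finset.univ.filter (fun q : α × α => q.1 ∈ S ∧ q.2 ∈ S),
      p q.1 * p q.2 / (∑ k ∈ S, p k) ^ 2 = 1 := by
  have hSS : Finset.univ.filter (fun q : α × α => q.1 ∈ S ∧ q.2 ∈ S) = S ×ˢ S := by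
    ext q; simp
  rw [hSS, Finset.sum_product]
  simp_rw [← Finset.sum_div]
  rw [← Finset.sum_mul_sum, sq, div_self (mul_ne_zero hS hS)]

theorem stmt0_general {n m : ℕ} (p : Fin n → ℝ) (hp : ∀ i, 0 < p i)
    (B : Fin m → Finset (Fin n)) (hpart : IsPartition B)
    (S : Finset (Fin n)) (hS : S.Nonempty) :
    ∑ q ∈ Finset.univ.filter
        (fun q : Fin n × Fin n =>
          q.1 ∈ S ∧ q.2 ∈ S ∧ ¬ ∃ j, q.1 ∈ B j ∧ q.2 ∈ B j),
      p q.1 * p q.2 / (∑ k ∈ S, p k) ^ 2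
    = 1 - Matrix.trace (luders B (rhoS p S) * luders B (rhoS p S)) := by
  have hp₀ : ∀ i, 0 ≤ p i := fun i => (hp i).le
  have hPr : ∑ k ∈ S, p k ≠ 0 := (Finset.sum_pos (fun i _ => hp i) hS).ne'
  have hsplit := Finset.sum_filter_add_sum_filter_not
    (Finset.univ.filter fun q : Fin n × Fin n => q.1 ∈ S ∧ q.2 ∈ S)
    (fun q => ∃ j, q.1 ∈ B j ∧ q.2 ∈ B j) (fun q => p q.1 * p q.2 / (∑ k ∈ S, p k) ^ 2)
  simp only [Finset.filter_filter, and_assoc] at hsplit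
  rw [sum_filter_mem_mem_mul_div_sq hPr] at hsplit
  rw [trace_luders_rhoS_mul_self (fun j k => hpart.blocks_disjoint j k) hp₀ S]
  -- `simp` rewrote the decidability instances of the filters; only those differ.
  convert eq_sub_of_add_eq' hsplit using 4

/-- The sum of the squares of the indistinction-amplitudes of `ρ(S)`
zeroed by the classical Lüders mixture operation equals the logical entropy
`1 - tr(ρ̂(S)²)` of the resulting matrix. -/
theorem stmt0 {n m : ℕ} (p : Fin n → ℝ) (hp : ∀ i, 0 < p i) (hsum : ∑ i, p i = 1)
    (B : Fin m → Finset (Fin n)) (hpart : IsPartition B)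
    (S : Finset (Fin n)) (hS : S.Nonempty) :
    ∑ q ∈ Finset.univ.filter
        (fun q : Fin n × Fin n =>
          q.1 ∈ S ∧ q.2 ∈ S ∧ ¬ ∃ j, q.1 ∈ B j ∧ q.2 ∈ B j),
      p q.1 * p q.2 / (∑ k ∈ S, p k) ^ 2
    = 1 - Matrix.trace (luders B (rhoS p S) * luders B (rhoS p S)) :=
  stmt0_general p hp B hpart S hS
end

section
/- The sum of the absolute squares of all the coherences (indistinction-amplitudes) α_i ᾱ_{i'} of ρ(ψ) that are zeroed (decohered) by the quantum Lüders mixture operation equals the quantum logical entropy of the resulting matrix: Σ_{(i,i'): i and i' in different blocks of the index partition} |α_i ᾱ_{i'}|² = 1 − tr(ρ̂(ψ)²) = h(ρ̂(ψ)). -/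
open Matrix

/-! The Lüders mixture of `ρ(ψ)` keeps exactly the entries `α_i ᾱ_{i'}` with `i, i'` in a common
block and zeroes the others. Since `ρ̂(ψ)` is Hermitian, `tr(ρ̂(ψ)²)` is the sum of the squared
moduli of its entries, i.e. of the retained coherences; the squared moduli of all coherences sum to
`(Σ |α_i|²)² = 1`, so the decohered ones account for `1 - tr(ρ̂(ψ)²)`. -/

open Finset

theorem Matrix.IsHermitian.trace_mul_self {𝕜 ι : Type*} [RCLike 𝕜] [Fintype ι]
    {M : Matrix ι ι 𝕜} (hM : M.IsHermitian) :
    (M * M).trace = ((∑ q : ι × ι, ‖M q.1 q.2‖ ^ 2 : ℝ) : 𝕜) := by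
  simp only [trace, diag_apply, mul_apply, Fintype.sum_prod_type]
  push_cast
  refine sum_congr rfl fun i _ => sum_congr rfl fun j _ => ?_
  rw [← hM.apply j i, RCLike.star_def, RCLike.mul_conj]

theorem isHermitian_rhoPsi {n : ℕ} (ψ : Fin n → ℂ) : (rhoPsi ψ).IsHermitian := by
  ext i j
  simp [rhoPsi, mul_comm]

theorem isHermitian_projC {n : ℕ} (S : Finset (Fin n)) : (projC S).IsHermitian := by
  ext i j
  by_cases h : i = j
  · subst h; simp [projC, apply_ite]
  · simp [projC, h, Ne.symm h]

theorem Matrix.IsHermitian.ludersC {n : ℕ} {ι : Type*} [Fintype ι]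
    (B : ι → Finset (Fin n)) {A : Matrix (Fin n) (Fin n) ℂ} (hA : A.IsHermitian) :
    (ludersC B A).IsHermitian :=
  IsSelfAdjoint.isHermitian <| isSelfAdjoint_sum _ fun j _ => IsHermitian.isSelfAdjoint <| by
    simpa only [(isHermitian_projC (B j)).eq] using
      isHermitian_conjTranspose_mul_mul (projC (B j)) hA

theorem projC_mul_mul_projC_apply {n : ℕ} (S : Finset (Fin n))
    (A : Matrix (Fin n) (Fin n) ℂ) (i i' : Fin n) :
    (projC S * A * projC S) i i' = if i ∈ S ∧ i' ∈ S then A i i' else 0 := by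
  by_cases hi : i ∈ S <;> by_cases hi' : i' ∈ S <;>
    simp [projC, mul_apply, hi, hi', ite_and]

theorem ludersC_apply {n : ℕ} {ι : Type*} [Fintype ι] {B : ι → Finset (Fin n)}
    (hB : Pairwise fun j k => Disjoint (B j) (B k)) (A : Matrix (Fin n) (Fin n) ℂ)
    (i i' : Fin n) :
    ludersC B A i i' = if ∃ j, i ∈ B j ∧ i' ∈ B j then A i i' else 0 := by
  simp only [ludersC, Matrix.sum_apply, projC_mul_mul_projC_apply]
  split_ifs with h
  · obtain ⟨j, hj⟩ := h
    rw [sum_eq_single j (fun k _ hkj => if_neg fun hk =>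
      disjoint_left.1 (hB hkj) hk.1 hj.1) (by simp), if_pos hj]
  · exact sum_eq_zero fun j _ => if_neg fun hj => h ⟨j, hj⟩

theorem sum_norm_rhoPsi_sq {n : ℕ} (ψ : Fin n → ℂ) :
    ∑ q : Fin n × Fin n, ‖ψ q.1 * star (ψ q.2)‖ ^ 2 = (∑ i, ‖ψ i‖ ^ 2) ^ 2 := by
  simp only [norm_mul, norm_star, mul_pow, Fintype.sum_prod_type]
  rw [sq, sum_mul_sum]

/-- The sum of the absolute squares of the coherences `α_i ᾱ_{i'}`
of `ρ(ψ)` zeroed by the quantum Lüders mixture operation equals the quantum logical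
entropy `1 - tr(ρ̂(ψ)²)` of the resulting matrix. -/
theorem stmt1 {n m : ℕ} (ψ : Fin n → ℂ) (hψ : ∑ i, ‖ψ i‖ ^ 2 = 1)
    (B : Fin m → Finset (Fin n)) (hpart : IsPartition B) :
    (↑(∑ q ∈ Finset.univ.filter
          (fun q : Fin n × Fin n => ¬ ∃ j, q.1 ∈ B j ∧ q.2 ∈ B j),
        ‖ψ q.1 * star (ψ q.2)‖ ^ 2) : ℂ)
    = 1 - Matrix.trace (ludersC B (rhoPsi ψ) * ludersC B (rhoPsi ψ)) := by
  have htrace : (ludersC B (rhoPsi ψ) * ludersC B (rhoPsi ψ)).trace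
      = ((∑ q ∈ univ.filter (fun q : Fin n × Fin n => ∃ j, q.1 ∈ B j ∧ q.2 ∈ B j),
          ‖ψ q.1 * star (ψ q.2)‖ ^ 2 : ℝ) : ℂ) := by
    rw [((isHermitian_rhoPsi ψ).ludersC B).trace_mul_self, sum_filter]
    simp [ludersC_apply hpart.blocks_disjoint, apply_ite (‖·‖ ^ 2), rhoPsi]
  have htotal := sum_filter_not_add_sum_filter univ
    (fun q : Fin n × Fin n => ∃ j, q.1 ∈ B j ∧ q.2 ∈ B j)
    fun q => ‖ψ q.1 * star (ψ q.2)‖ ^ 2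
  rw [sum_norm_rhoPsi_sq, hψ, one_pow] at htotal
  rw [htrace, eq_sub_iff_add_eq]
  exact_mod_cast htotal
end

section
/- For any partition π = {B_1, …, B_m} of U, the trace of the square of its density matrix is the sum of the squared block probabilities: tr[ρ(π)²] = Σ_{j=1}^m Pr(B_j)²; hence the matrix definition of logical entropy agrees with the partition definition: h(ρ(π)) = 1 − tr[ρ(π)²] = 1 − Σ_{j=1}^m Pr(B_j)² = h(π). -/
open Matrix

/-- For a partition `π`, `tr[ρ(π)²] = Σ_j Pr(B_j)²`, hence the matrix
definition of logical entropy agrees with the partition definition: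
`1 - tr[ρ(π)²] = 1 - Σ_j Pr(B_j)² = h(π)`. -/
theorem stmt5 {n m : ℕ} (p : Fin n → ℝ) (hp : ∀ i, 0 < p i) (hsum : ∑ i, p i = 1)
    (B : Fin m → Finset (Fin n)) (hpart : IsPartition B) :
    Matrix.trace (rhoPart p B * rhoPart p B) = ∑ j, (∑ i ∈ B j, p i) ^ 2 ∧
    1 - Matrix.trace (rhoPart p B * rhoPart p B) = logEntropy p B := by
  classical
  have hPr : ∀ j, 0 < ∑ i ∈ B j, p i := fun j =>
    Finset.sum_pos (fun i _ => hp i) (hpart.blocks_nonempty j)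
  have huniq : ∀ (i : Fin n) (j j' : Fin m), i ∈ B j → i ∈ B j' → j = j' := by
    intro i j j' h1 h2
    by_contra hne
    exact Finset.disjoint_left.mp (hpart.blocks_disjoint j j' hne) h1 h2
  have hentry : ∀ i k, rhoPart p B i k =
      if ∃ j, i ∈ B j ∧ k ∈ B j then Real.sqrt (p i * p k) else 0 := by
    intro i k
    have h1 : rhoPart p B i k =
        ∑ j, (if i ∈ B j ∧ k ∈ B j then Real.sqrt (p i * p k) else 0) := by
      simp only [rhoPart, Matrix.sum_apply, Matrix.smul_apply, rhoS, Matrix.of_apply,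
        smul_eq_mul]
      refine Finset.sum_congr rfl fun j _ => ?_
      split
      · rw [mul_div_cancel₀ _ (hPr j).ne']
      · simp
    rw [h1]
    by_cases h : ∃ j, i ∈ B j ∧ k ∈ B j
    · obtain ⟨j0, hj0⟩ := h
      rw [if_pos ⟨j0, hj0⟩, Finset.sum_eq_single j0]
      · rw [if_pos hj0]
      · intro j _ hne
        rw [if_neg]
        rintro ⟨ha, _⟩
        exact hne (huniq i j j0 ha hj0.1)
      · intro h'; exact absurd (Finset.mem_univ j0) h'
    · rw [if_neg h]
      exact Finset.sum_eq_zero fun j _ => if_neg fun hc => h ⟨j, hc⟩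
  have htr : Matrix.trace (rhoPart p B * rhoPart p B) = ∑ j, (∑ i ∈ B j, p i) ^ 2 := by
    have : Matrix.trace (rhoPart p B * rhoPart p B) =
        ∑ i, ∑ k, rhoPart p B i k * rhoPart p B k i := by
      simp [Matrix.trace, Matrix.mul_apply, Matrix.diag]
    rw [this]
    have step : ∀ i k : Fin n, rhoPart p B i k * rhoPart p B k i =
        ∑ j, (if i ∈ B j then p i else 0) * (if k ∈ B j then p k else 0) := by
      intro i k
      rw [hentry, hentry]
      by_cases h : ∃ j, i ∈ B j ∧ k ∈ B j
      · obtain ⟨j0, hj0⟩ := h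
        rw [if_pos ⟨j0, hj0⟩, if_pos ⟨j0, hj0.2, hj0.1⟩]
        have hs : Real.sqrt (p i * p k) * Real.sqrt (p k * p i) = p i * p k := by
          rw [mul_comm (p k) (p i)]
          exact Real.mul_self_sqrt (mul_nonneg (hp i).le (hp k).le)
        rw [hs, Finset.sum_eq_single j0]
        · rw [if_pos hj0.1, if_pos hj0.2]
        · intro j _ hne
          by_cases hi : i ∈ B j
          · exact absurd (huniq i j j0 hi hj0.1) hne
          · rw [if_neg hi, zero_mul]
        · intro h'; exact absurd (Finset.mem_univ j0) h'
      · rw [if_neg h, zero_mul]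
        symm
        refine Finset.sum_eq_zero fun j _ => ?_
        by_cases hi : i ∈ B j
        · rw [if_neg fun hk => h ⟨j, hi, hk⟩, mul_zero]
        · rw [if_neg hi, zero_mul]
    simp only [step]
    have swap : ∀ f : Fin n → Fin n → Fin m → ℝ,
        ∑ i, ∑ k, ∑ j, f i k j = ∑ j, ∑ i, ∑ k, f i k j := by
      intro f
      calc ∑ i, ∑ k, ∑ j, f i k j = ∑ i, ∑ j, ∑ k, f i k j :=
            Finset.sum_congr rfl fun i _ => Finset.sum_comm
        _ = ∑ j, ∑ i, ∑ k, f i k j := Finset.sum_comm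
    rw [swap]
    refine Finset.sum_congr rfl fun j _ => ?_
    rw [show ∑ i, ∑ k, (if i ∈ B j then p i else 0) * (if k ∈ B j then p k else 0)
        = (∑ i, if i ∈ B j then p i else 0) * (∑ k, if k ∈ B j then p k else 0) by
      rw [Finset.sum_mul_sum]]
    rw [Finset.sum_ite_mem, Finset.univ_inter, sq]
  refine ⟨htr, ?_⟩
  rw [htr]; rfl
end

section
/- A superposition state has a definite attribute value exactly when it lies within a single block: for a nonempty subset S ⊆ U and partition π = {B_1, …, B_m} of U, the Lüders mixture operation leaves ρ(S) unchanged, ρ̂(S) = ρ(S), if and only if S ⊆ B_j for some block B_j of π. -/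
open Matrix

/-- The Lüders mixture operation leaves `ρ(S)` unchanged iff `S`
is contained in a single block of the partition. -/
theorem stmt10 {n m : ℕ} (p : Fin n → ℝ) (hp : ∀ i, 0 < p i) (hsum : ∑ i, p i = 1)
    (B : Fin m → Finset (Fin n)) (hpart : IsPartition B)
    (S : Finset (Fin n)) (hS : S.Nonempty) :
    luders B (rhoS p S) = rhoS p S ↔ ∃ j, S ⊆ B j := by
  have hPr : 0 < ∑ k ∈ S, p k := Finset.sum_pos (fun i _ => hp i) hS
  have hproj : ∀ A : Finset (Fin n),
      projM A = Matrix.diagonal (fun i => if i ∈ A then (1:ℝ) else 0) := by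
    intro A; ext i j
    by_cases h : i = j <;> simp [projM, Matrix.diagonal_apply, h]
  have happ : ∀ (ρ : Matrix (Fin n) (Fin n) ℝ) (i i' : Fin n),
      luders B ρ i i' =
        ∑ j, (if i ∈ B j then (1:ℝ) else 0) * ((if i' ∈ B j then (1:ℝ) else 0) * ρ i i') := by
    intro ρ i i'
    simp only [luders, hproj, Matrix.sum_apply, Matrix.diagonal_mul, Matrix.mul_diagonal]
    refine Finset.sum_congr rfl fun j _ => by ring
  have hρpos : ∀ i ∈ S, ∀ i' ∈ S, 0 < rhoS p S i i' := by
    intro i hi i' hi'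
    simp only [rhoS, Matrix.of_apply, if_pos (And.intro hi hi')]
    exact div_pos (Real.sqrt_pos.mpr (mul_pos (hp i) (hp i'))) hPr
  constructor
  · intro h
    obtain ⟨i0, hi0⟩ := hS
    obtain ⟨j0, hj0⟩ := hpart.blocks_cover i0
    refine ⟨j0, fun i hi => ?_⟩
    by_contra hni
    have h1 : luders B (rhoS p S) i0 i = 0 := by
      rw [happ]
      refine Finset.sum_eq_zero fun j _ => ?_
      by_cases hj : j = j0
      · subst hj; simp [hni]
      · have : i0 ∉ B j := fun hmem =>
          Finset.disjoint_left.mp (hpart.blocks_disjoint j j0 hj) hmem hj0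
        simp [this]
    rw [h] at h1
    exact absurd h1 (ne_of_gt (hρpos i0 hi0 i hi))
  · rintro ⟨j0, hSj⟩
    ext i i'
    rw [happ]
    by_cases hii : i ∈ S ∧ i' ∈ S
    · rw [Finset.sum_eq_single j0]
      · simp [hSj hii.1, hSj hii.2]
      · intro j _ hj
        have : i ∉ B j := fun hmem =>
          Finset.disjoint_left.mp (hpart.blocks_disjoint j j0 hj) hmem (hSj hii.1)
        simp [this]
      · intro hj; exact absurd (Finset.mem_univ j0) hj
    · have : rhoS p S i i' = 0 := by simp [rhoS, hii]
      rw [this]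
      exact Finset.sum_eq_zero fun j _ => by ring
end

section
/- If the elements of a nonempty subset S ⊆ U do not all share a common block of the partition π (i.e., S is not contained in any single block B_j), then the classified matrix is a properly mixed density matrix: tr[ρ̂(S)²] < 1, so its logical entropy h(ρ̂(S)) = 1 − tr[ρ̂(S)²] is strictly positive. -/
open Matrix

/-- If `S` is not contained in any single block of `π`, then the
classified matrix is properly mixed: `tr[ρ̂(S)²] < 1`, so `h(ρ̂(S)) > 0`. -/
theorem stmt11 {n m : ℕ} (p : Fin n → ℝ) (hp : ∀ i, 0 < p i) (hsum : ∑ i, p i = 1)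
    (B : Fin m → Finset (Fin n)) (hpart : IsPartition B)
    (S : Finset (Fin n)) (hS : S.Nonempty)
    (hnb : ¬ ∃ j, S ⊆ B j) :
    Matrix.trace (luders B (rhoS p S) * luders B (rhoS p S)) < 1 ∧
    0 < 1 - Matrix.trace (luders B (rhoS p S) * luders B (rhoS p S)) := by
  classical
  set q : ℝ := ∑ k ∈ S, p k with hq_def
  have hq : 0 < q := Finset.sum_pos (fun i _ => hp i) hS
  -- entries of the Lüders mixture
  have hL : ∀ i k, luders B (rhoS p S) i k =
      if (∃ j, i ∈ B j ∧ k ∈ B j) then rhoS p S i k else 0 := by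
    intro i k
    have hterm : ∀ j, (projM (B j) * rhoS p S * projM (B j)) i k =
        if i ∈ B j ∧ k ∈ B j then rhoS p S i k else 0 := by
      intro j
      by_cases h1 : i ∈ B j <;> by_cases h2 : k ∈ B j <;>
        simp [projM, Matrix.mul_apply, ite_and, h1, h2, ite_mul, mul_ite,
          Finset.sum_ite_eq, Finset.sum_ite_eq']
    have hsa : luders B (rhoS p S) i k =
        ∑ j, (projM (B j) * rhoS p S * projM (B j)) i k := by
      simp [luders, Matrix.sum_apply]
    rw [hsa]
    simp only [hterm]
    by_cases h : ∃ j, i ∈ B j ∧ k ∈ B j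
    · obtain ⟨j1, hj1⟩ := h
      rw [Finset.sum_eq_single j1]
      · rw [if_pos hj1, if_pos ⟨j1, hj1⟩]
      · intro j _ hjne
        have hno : ¬ (i ∈ B j ∧ k ∈ B j) := by
          rintro ⟨ha, _⟩
          exact (Finset.disjoint_left.mp (hpart.blocks_disjoint j j1 hjne) ha) hj1.1
        simp [hno]
      · simp
    · have hall : ∀ j : Fin m, ¬ (i ∈ B j ∧ k ∈ B j) := fun j hj => h ⟨j, hj⟩
      simp [hall, h]
  -- the product of entries
  have hprod : ∀ i k, luders B (rhoS p S) i k * luders B (rhoS p S) k i =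
      if (i ∈ S ∧ k ∈ S ∧ ∃ j, i ∈ B j ∧ k ∈ B j) then p i * p k / q ^ 2 else 0 := by
    intro i k
    rw [hL, hL]
    by_cases hc : ∃ j, i ∈ B j ∧ k ∈ B j
    · have hc' : ∃ j, k ∈ B j ∧ i ∈ B j := by
        obtain ⟨j, ha, hb⟩ := hc; exact ⟨j, hb, ha⟩
      rw [if_pos hc, if_pos hc']
      by_cases hi : i ∈ S <;> by_cases hk : k ∈ S
      · rw [if_pos ⟨hi, hk, hc⟩]
        simp only [rhoS, Matrix.of_apply, if_pos (And.intro hi hk),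
          if_pos (And.intro hk hi)]
        have hsq : Real.sqrt (p i * p k) * Real.sqrt (p k * p i) = p i * p k := by
          rw [mul_comm (p k) (p i), Real.mul_self_sqrt (mul_pos (hp i) (hp k)).le]
        rw [div_mul_div_comm, hsq, sq]
      · simp [rhoS, hi, hk]
      · simp [rhoS, hi, hk]
      · simp [rhoS, hi, hk]
    · have hc' : ¬ ∃ j, k ∈ B j ∧ i ∈ B j := by
        rintro ⟨j, ha, hb⟩; exact hc ⟨j, hb, ha⟩
      have hr : ¬ (i ∈ S ∧ k ∈ S ∧ ∃ j, i ∈ B j ∧ k ∈ B j) := by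
        rintro ⟨_, _, h⟩; exact hc h
      rw [if_neg hc, if_neg hc', if_neg hr, zero_mul]
  -- trace as a double sum
  have htr : Matrix.trace (luders B (rhoS p S) * luders B (rhoS p S)) =
      ∑ i, ∑ k, (if (i ∈ S ∧ k ∈ S ∧ ∃ j, i ∈ B j ∧ k ∈ B j) then p i * p k / q ^ 2 else 0) := by
    rw [Matrix.trace]
    simp only [Matrix.diag, Matrix.mul_apply]
    exact Finset.sum_congr rfl fun i _ => Finset.sum_congr rfl fun k _ => hprod i k
  -- a pair of elements of S not in a common block
  obtain ⟨i0, hi0⟩ := hS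
  obtain ⟨j0, hj0⟩ := hpart.blocks_cover i0
  have hns : ¬ S ⊆ B j0 := fun h => hnb ⟨j0, h⟩
  obtain ⟨k0, hk0S, hk0⟩ := Finset.not_subset.mp hns
  have hc0 : ¬ ∃ j, i0 ∈ B j ∧ k0 ∈ B j := by
    rintro ⟨j, h1, h2⟩
    by_cases hj : j = j0
    · exact hk0 (hj ▸ h2)
    · exact (Finset.disjoint_left.mp (hpart.blocks_disjoint j j0 hj) h1) hj0
  -- strict bound
  have hlt : Matrix.trace (luders B (rhoS p S) * luders B (rhoS p S)) <
      ∑ i, ∑ k, (if i ∈ S ∧ k ∈ S then p i * p k / q ^ 2 else 0) := by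
    rw [htr]
    apply Finset.sum_lt_sum
    · intro i _
      apply Finset.sum_le_sum
      intro k _
      by_cases h : i ∈ S ∧ k ∈ S ∧ ∃ j, i ∈ B j ∧ k ∈ B j
      · rw [if_pos h, if_pos ⟨h.1, h.2.1⟩]
      · rw [if_neg h]
        split
        · exact div_nonneg (mul_nonneg (hp i).le (hp k).le) (sq_nonneg q)
        · exact le_refl 0
    · refine ⟨i0, Finset.mem_univ i0, ?_⟩
      apply Finset.sum_lt_sum
      · intro k _
        by_cases h : i0 ∈ S ∧ k ∈ S ∧ ∃ j, i0 ∈ B j ∧ k ∈ B j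
        · rw [if_pos h, if_pos ⟨h.1, h.2.1⟩]
        · rw [if_neg h]
          split
          · exact div_nonneg (mul_nonneg (hp i0).le (hp k).le) (sq_nonneg q)
          · exact le_refl 0
      · refine ⟨k0, Finset.mem_univ k0, ?_⟩
        have h1 : ¬ (i0 ∈ S ∧ k0 ∈ S ∧ ∃ j, i0 ∈ B j ∧ k0 ∈ B j) := by
          rintro ⟨_, _, h⟩; exact hc0 h
        rw [if_neg h1, if_pos ⟨hi0, hk0S⟩]
        exact div_pos (mul_pos (hp i0) (hp k0)) (pow_pos hq 2)
  have hsum1 : ∑ i, ∑ k, (if i ∈ S ∧ k ∈ S then p i * p k / q ^ 2 else 0) = 1 := by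
    have hrow : ∀ i : Fin n, ∑ k, (if i ∈ S ∧ k ∈ S then p i * p k / q ^ 2 else 0) =
        if i ∈ S then p i * q / q ^ 2 else 0 := by
      intro i
      by_cases hi : i ∈ S
      · simp only [hi, true_and, if_true]
        rw [← Finset.sum_filter]
        have hfil : Finset.univ.filter (· ∈ S) = S := by ext x; simp
        rw [hfil, ← Finset.sum_div, ← Finset.mul_sum, ← hq_def]
      · simp [hi]
    simp only [hrow]
    rw [← Finset.sum_filter]
    have hfil : Finset.univ.filter (· ∈ S) = S := by ext x; simp
    rw [hfil, ← Finset.sum_div, ← Finset.sum_mul, ← hq_def]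
    field_simp
  rw [hsum1] at hlt
  exact ⟨hlt, by linarith⟩
end

section
/- The quantum logical entropy of the post-measurement state is the probability of getting different eigenvalues in two independent measurements: tr[ρ̂(ψ)²] = Σ_{j=1}^m (Σ_{i ∈ B_j} |α_i|²)², so that h(ρ̂(ψ)) = 1 − Σ_{j=1}^m q_j² where q_j = Σ_{i ∈ B_j} |α_i|² is the Born-rule probability of the j-th measurement outcome. -/
open Matrix

lemma sum_ite_partition {n m : ℕ} {B : Fin m → Finset (Fin n)} (hpart : IsPartition B)
    (i k : Fin n) (x : ℂ) :
    ∑ j, (if i ∈ B j ∧ k ∈ B j then x else 0)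
      = if ∃ j, i ∈ B j ∧ k ∈ B j then x else 0 := by
  by_cases h : ∃ j, i ∈ B j ∧ k ∈ B j
  · obtain ⟨j0, hj0⟩ := h
    rw [if_pos ⟨j0, hj0⟩]
    rw [Finset.sum_eq_single j0]
    · rw [if_pos hj0]
    · intro j _ hj
      rw [if_neg]
      rintro ⟨hi, -⟩
      exact (Finset.disjoint_left.mp (hpart.blocks_disjoint j j0 hj)) hi hj0.1
    · intro h; exact absurd (Finset.mem_univ j0) h
  · rw [if_neg h]
    refine Finset.sum_eq_zero fun j _ => ?_
    rw [if_neg fun hc => h ⟨j, hc⟩]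

lemma ludersC_apply_s12 {n m : ℕ} (ψ : Fin n → ℂ) {B : Fin m → Finset (Fin n)}
    (hpart : IsPartition B) (i k : Fin n) :
    ludersC B (rhoPsi ψ) i k
      = (if ∃ j, i ∈ B j ∧ k ∈ B j then 1 else 0) * (ψ i * star (ψ k)) := by
  have hjk : ∀ j, (projC (B j) * rhoPsi ψ * projC (B j)) i k
      = if i ∈ B j ∧ k ∈ B j then ψ i * star (ψ k) else 0 := by
    intro j
    rw [Matrix.mul_apply]
    simp only [Matrix.mul_apply, projC, rhoPsi, Matrix.of_apply]
    simp only [ite_and, ite_mul, mul_ite, one_mul, zero_mul, mul_zero, mul_one,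
      Finset.sum_ite_eq, Finset.sum_ite_eq', Finset.mem_univ, if_true]
    by_cases hi : i ∈ B j <;> by_cases hk : k ∈ B j <;> simp [hi, hk]
  unfold ludersC
  rw [Matrix.sum_apply]
  simp only [hjk]
  rw [sum_ite_partition hpart]
  by_cases h : ∃ j, i ∈ B j ∧ k ∈ B j <;> simp [h]

/-- `tr[ρ̂(ψ)²] = Σ_j (Σ_{i ∈ B_j} |α_i|²)²`, so the quantum logical
entropy of the post-measurement state is `1 - Σ_j q_j²` where `q_j` are the Born-rule
outcome probabilities. -/
theorem stmt12 {n m : ℕ} (ψ : Fin n → ℂ) (hψ : ∑ i, ‖ψ i‖ ^ 2 = 1)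
    (B : Fin m → Finset (Fin n)) (hpart : IsPartition B) :
    Matrix.trace (ludersC B (rhoPsi ψ) * ludersC B (rhoPsi ψ))
      = (↑(∑ j, (∑ i ∈ B j, ‖ψ i‖ ^ 2) ^ 2) : ℂ) ∧
    (1 : ℂ) - Matrix.trace (ludersC B (rhoPsi ψ) * ludersC B (rhoPsi ψ))
      = (↑(1 - ∑ j, (∑ i ∈ B j, ‖ψ i‖ ^ 2) ^ 2) : ℂ) := by
  have key : Matrix.trace (ludersC B (rhoPsi ψ) * ludersC B (rhoPsi ψ))
      = (↑(∑ j, (∑ i ∈ B j, ‖ψ i‖ ^ 2) ^ 2) : ℂ) := by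
    have htr : Matrix.trace (ludersC B (rhoPsi ψ) * ludersC B (rhoPsi ψ))
        = ∑ i, ∑ k, (if ∃ j, i ∈ B j ∧ k ∈ B j then 1 else 0)
            * ((‖ψ i‖ ^ 2 : ℂ) * (‖ψ k‖ ^ 2 : ℂ)) := by
      rw [Matrix.trace]
      simp only [Matrix.diag_apply, Matrix.mul_apply, ludersC_apply_s12 ψ hpart]
      refine Finset.sum_congr rfl fun i _ => Finset.sum_congr rfl fun k _ => ?_
      have hsym : (∃ j, k ∈ B j ∧ i ∈ B j) ↔ (∃ j, i ∈ B j ∧ k ∈ B j) := by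
        constructor <;> rintro ⟨j, h1, h2⟩ <;> exact ⟨j, h2, h1⟩
      rw [if_congr hsym rfl rfl]
      have h1 : ψ i * star (ψ i) = (‖ψ i‖ ^ 2 : ℂ) := by
        rw [Complex.star_def, Complex.mul_conj, Complex.normSq_eq_norm_sq]
        push_cast
        rfl
      have h2 : ψ k * star (ψ k) = (‖ψ k‖ ^ 2 : ℂ) := by
        rw [Complex.star_def, Complex.mul_conj, Complex.normSq_eq_norm_sq]
        push_cast
        rfl
      by_cases h : ∃ j, i ∈ B j ∧ k ∈ B j
      · simp only [if_pos h, one_mul]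
        calc ψ i * star (ψ k) * (ψ k * star (ψ i))
            = (ψ i * star (ψ i)) * (ψ k * star (ψ k)) := by ring
          _ = (‖ψ i‖ ^ 2 : ℂ) * (‖ψ k‖ ^ 2 : ℂ) := by rw [h1, h2]
      · simp [if_neg h]
    rw [htr]
    push_cast
    have hrhs : ∑ j, ((∑ i ∈ B j, ((‖ψ i‖ : ℂ)) ^ 2) ^ 2)
        = ∑ i, ∑ k, (if ∃ j, i ∈ B j ∧ k ∈ B j then 1 else 0)
            * ((‖ψ i‖ ^ 2 : ℂ) * (‖ψ k‖ ^ 2 : ℂ)) := by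
      have hj : ∀ j : Fin m, (∑ i ∈ B j, ((‖ψ i‖ : ℂ)) ^ 2) ^ 2
          = ∑ i, ∑ k, (if i ∈ B j ∧ k ∈ B j then 1 else 0)
              * ((‖ψ i‖ ^ 2 : ℂ) * (‖ψ k‖ ^ 2 : ℂ)) := by
        intro j
        rw [sq, Finset.sum_mul_sum]
        rw [← Finset.sum_subset (Finset.subset_univ (B j))
          (f := fun i => ∑ k, (if i ∈ B j ∧ k ∈ B j then 1 else 0)
              * ((‖ψ i‖ ^ 2 : ℂ) * (‖ψ k‖ ^ 2 : ℂ)))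
          (by intro i _ hi; refine Finset.sum_eq_zero fun k _ => ?_; simp [hi])]
        refine Finset.sum_congr rfl fun i hi => ?_
        rw [← Finset.sum_subset (Finset.subset_univ (B j))
          (f := fun k => (if i ∈ B j ∧ k ∈ B j then 1 else 0)
              * ((‖ψ i‖ ^ 2 : ℂ) * (‖ψ k‖ ^ 2 : ℂ)))
          (by intro k _ hk; simp [hk])]
        refine Finset.sum_congr rfl fun k hk => ?_
        simp [hi, hk]
      simp only [hj]
      rw [Finset.sum_comm]
      refine Finset.sum_congr rfl fun i _ => ?_
      rw [Finset.sum_comm]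
      refine Finset.sum_congr rfl fun k _ => ?_
      simp only [boole_mul, ite_mul, one_mul, zero_mul] at *
      exact sum_ite_partition hpart i k _
    rw [← hrhs]
  refine ⟨key, ?_⟩
  rw [key]
  push_cast
  ring
end

section
/- Classifying the blurred universe by a partition yields the partition's density matrix: applying the Lüders mixture operation with respect to a partition π = {B_1, …, B_m} to the density matrix ρ(U) of the full set U (i.e., of the indiscrete partition 𝟘_U = {U}) produces ρ(π): Σ_{j=1}^m P_{B_j} ρ(U) P_{B_j} = ρ(π) = Σ_{j=1}^m Pr(B_j) ρ(B_j). -/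
open Matrix

/-- Classifying the blurred universe by a partition yields the
partition's density matrix: `Σ_j P_{B_j} ρ(U) P_{B_j} = ρ(π) = Σ_j Pr(B_j) ρ(B_j)`. -/
theorem stmt17 {n m : ℕ} (p : Fin n → ℝ) (hp : ∀ i, 0 < p i) (hsum : ∑ i, p i = 1)
    (B : Fin m → Finset (Fin n)) (hpart : IsPartition B) :
    luders B (rhoS p (Finset.univ : Finset (Fin n))) = rhoPart p B := by
  have hPr : ∀ j, (0:ℝ) < ∑ k ∈ B j, p k := fun j =>
    Finset.sum_pos (fun k _ => hp k) (hpart.blocks_nonempty j)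
  ext i i'
  have hproj : ∀ j, (projM (B j) * rhoS p Finset.univ * projM (B j)) i i'
      = if i ∈ B j ∧ i' ∈ B j then Real.sqrt (p i * p i') else 0 := by
    intro j
    simp only [Matrix.mul_apply, projM, rhoS, Matrix.of_apply, hsum,
      Finset.mem_univ, and_self, if_true, div_one, ite_mul, mul_ite, one_mul, mul_one,
      zero_mul, mul_zero, ite_and]
    rw [Finset.sum_ite_eq' Finset.univ i', Finset.sum_ite_eq Finset.univ i]
    by_cases h1 : i ∈ B j <;> by_cases h2 : i' ∈ B j <;> simp [h1, h2]
  simp only [luders, Matrix.sum_apply]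
  simp only [hproj]
  simp only [rhoPart, Matrix.sum_apply, Matrix.smul_apply, rhoS, Matrix.of_apply, smul_eq_mul]
  apply Finset.sum_congr rfl
  intro j _
  by_cases h : i ∈ B j ∧ i' ∈ B j
  · simp [h, mul_div_cancel₀ _ (hPr j).ne']
  · simp [h]
end

section
/- Successive classifications compound to the join: for partitions π = {B_j} and σ = {C_k} of U, applying the Lüders mixture operation with respect to σ to the density matrix ρ(π) yields the density matrix of the join, Σ_k P_{C_k} ρ(π) P_{C_k} = ρ(π ∨ σ), where π ∨ σ is the partition whose blocks are the nonempty intersections B_j ∩ C_k. -/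
open Matrix

section Aux

lemma sum_if_unique {ι : Type*} [Fintype ι] (P : ι → Prop) [DecidablePred P]
    [Decidable (∃ j, P j)] (h : ∀ j k, P j → P k → j = k) (f : ℝ) :
    ∑ j, (if P j then f else 0) = if ∃ j, P j then f else 0 := by
  by_cases hex : ∃ j, P j
  · obtain ⟨j0, hj0⟩ := hex
    rw [if_pos ⟨j0, hj0⟩, Finset.sum_eq_single j0]
    · rw [if_pos hj0]
    · intro j _ hj
      rw [if_neg (fun hPj => hj (h j j0 hPj hj0))]
    · intro hmem; exact absurd (Finset.mem_univ j0) hmem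
  · rw [if_neg hex]
    apply Finset.sum_eq_zero
    intro j _
    rw [if_neg (fun hPj => hex ⟨j, hPj⟩)]

lemma proj_mul_proj {n : ℕ} (S : Finset (Fin n)) (ρ : Matrix (Fin n) (Fin n) ℝ)
    (i i' : Fin n) :
    (projM S * ρ * projM S) i i' = if i ∈ S ∧ i' ∈ S then ρ i i' else 0 := by
  simp only [projM, Matrix.mul_apply, Matrix.of_apply]
  rw [Finset.sum_eq_single i']
  · rw [Finset.sum_eq_single i]
    · by_cases h1 : i ∈ S <;> by_cases h2 : i' ∈ S <;> simp [h1, h2]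
    · intro x _ hx
      simp [Ne.symm hx]
    · simp
  · intro x _ hx
    simp [hx]
  · simp

end Aux

/-- Successive classifications compound to the join: applying the
Lüders mixture operation for `σ = {C_k}` to `ρ(π)` yields `ρ(π ∨ σ)`, the density
matrix of the partition whose blocks are the nonempty intersections `B_j ∩ C_k`. -/
theorem stmt18 {n m m' : ℕ} (p : Fin n → ℝ) (hp : ∀ i, 0 < p i) (hsum : ∑ i, p i = 1)
    (B : Fin m → Finset (Fin n)) (C : Fin m' → Finset (Fin n))
    (hB : IsPartition B) (hC : IsPartition C) :
    luders C (rhoPart p B) =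
      ∑ jk ∈ Finset.univ.filter
          (fun jk : Fin m × Fin m' => (B jk.1 ∩ C jk.2).Nonempty),
        (∑ i ∈ B jk.1 ∩ C jk.2, p i) • rhoS p (B jk.1 ∩ C jk.2) := by
  classical
  have hPrB : ∀ j, (0:ℝ) < ∑ i ∈ B j, p i := fun j =>
    Finset.sum_pos (fun i _ => hp i) (hB.blocks_nonempty j)
  have hcancel : ∀ (a b : ℝ), a ≠ 0 → a * (b / a) = b := by
    intro a b h; field_simp
  ext i i'
  have hR : rhoPart p B i i'
      = if ∃ j, i ∈ B j ∧ i' ∈ B j then Real.sqrt (p i * p i') else 0 := by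
    rw [rhoPart]
    simp only [Matrix.sum_apply, Matrix.smul_apply, rhoS, Matrix.of_apply, smul_eq_mul,
      mul_ite, mul_zero]
    rw [Finset.sum_congr rfl (fun j _ =>
      if_congr Iff.rfl (hcancel _ _ (ne_of_gt (hPrB j))) rfl)]
    exact sum_if_unique (fun j => i ∈ B j ∧ i' ∈ B j) (fun j j' hj hj' => by
      by_contra hne
      exact (Finset.disjoint_left.mp (hB.blocks_disjoint j j' hne)) hj.1 hj'.1) _
  have hLHS : luders C (rhoPart p B) i i'
      = if (∃ k, i ∈ C k ∧ i' ∈ C k) ∧ (∃ j, i ∈ B j ∧ i' ∈ B j)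
          then Real.sqrt (p i * p i') else 0 := by
    rw [luders]
    simp only [Matrix.sum_apply]
    rw [Finset.sum_congr rfl (fun k _ => proj_mul_proj (C k) (rhoPart p B) i i'),
      sum_if_unique (fun k => i ∈ C k ∧ i' ∈ C k) (fun k k' hk hk' => by
        by_contra hne
        exact (Finset.disjoint_left.mp (hC.blocks_disjoint k k' hne)) hk.1 hk'.1) _,
      hR]
    by_cases hk : ∃ k, i ∈ C k ∧ i' ∈ C k <;>
      by_cases hj : ∃ j, i ∈ B j ∧ i' ∈ B j <;> simp [hk, hj]
  have hRHS : (∑ jk ∈ Finset.univ.filter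
          (fun jk : Fin m × Fin m' => (B jk.1 ∩ C jk.2).Nonempty),
        (∑ i ∈ B jk.1 ∩ C jk.2, p i) • rhoS p (B jk.1 ∩ C jk.2)) i i'
      = if (∃ jk : Fin m × Fin m',
            (i ∈ B jk.1 ∩ C jk.2) ∧ (i' ∈ B jk.1 ∩ C jk.2))
          then Real.sqrt (p i * p i') else 0 := by
    rw [Matrix.sum_apply, Finset.sum_filter]
    rw [Finset.sum_congr rfl (fun jk _ => show _ =
        (if (i ∈ B jk.1 ∩ C jk.2) ∧ (i' ∈ B jk.1 ∩ C jk.2)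
          then Real.sqrt (p i * p i') else 0) from by
      by_cases hmem : (i ∈ B jk.1 ∩ C jk.2) ∧ (i' ∈ B jk.1 ∩ C jk.2)
      · have hne : (B jk.1 ∩ C jk.2).Nonempty := ⟨i, hmem.1⟩
        have hpos : (0:ℝ) < ∑ x ∈ B jk.1 ∩ C jk.2, p x :=
          Finset.sum_pos (fun x _ => hp x) hne
        rw [if_pos hne, if_pos hmem]
        simp only [Matrix.smul_apply, rhoS, Matrix.of_apply, smul_eq_mul,
          if_pos hmem]
        exact hcancel _ _ (ne_of_gt hpos)
      · rw [if_neg hmem]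
        by_cases hne : (B jk.1 ∩ C jk.2).Nonempty
        · rw [if_pos hne]
          simp only [Matrix.smul_apply, rhoS, Matrix.of_apply, smul_eq_mul,
            if_neg hmem, mul_zero]
        · rw [if_neg hne])]
    exact sum_if_unique
      (fun jk : Fin m × Fin m' => (i ∈ B jk.1 ∩ C jk.2) ∧ (i' ∈ B jk.1 ∩ C jk.2))
      (fun jk jk' hjk hjk' => by
      have h1 : jk.1 = jk'.1 := by
        by_contra h
        exact (Finset.disjoint_left.mp (hB.blocks_disjoint _ _ h))
          (Finset.mem_inter.mp hjk.1).1 (Finset.mem_inter.mp hjk'.1).1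
      have h2 : jk.2 = jk'.2 := by
        by_contra h
        exact (Finset.disjoint_left.mp (hC.blocks_disjoint _ _ h))
          (Finset.mem_inter.mp hjk.1).2 (Finset.mem_inter.mp hjk'.1).2
      exact Prod.ext h1 h2) _
  rw [hLHS, hRHS]
  have hiff : (∃ jk : Fin m × Fin m',
        (i ∈ B jk.1 ∩ C jk.2) ∧ (i' ∈ B jk.1 ∩ C jk.2))
      ↔ (∃ k, i ∈ C k ∧ i' ∈ C k) ∧ (∃ j, i ∈ B j ∧ i' ∈ B j) := by
    constructor
    · rintro ⟨⟨j, k⟩, h1, h2⟩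
      simp only [Finset.mem_inter] at h1 h2
      exact ⟨⟨k, h1.2, h2.2⟩, ⟨j, h1.1, h2.1⟩⟩
    · rintro ⟨⟨k, hk1, hk2⟩, ⟨j, hj1, hj2⟩⟩
      exact ⟨(j, k), Finset.mem_inter.mpr ⟨hj1, hk1⟩, Finset.mem_inter.mpr ⟨hj2, hk2⟩⟩
  exact if_congr hiff.symm rfl rfl
end
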